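/- Let q^ξ(ξ0) := det(ξ0 A^0 + A(ξ)) be the characteristic polynomial of the first-order formulation (up to sign convention). If all zeros of p^ξ are nonzero, then the zero ξ0 = 0 of q^ξ has algebraic multiplicity exactly (d−1)n, and this equals the dimension of ker A(ξ) for any nonzero ξ, so the zero mode is semisimple. -/

import Mathlib

/-!
Order the unknowns as `(P, Q_1, …, Q_d)`. Then `ξ0 A⁰ + A(0, ξ)` is the block matrix
`[[ξ0 B00 + S, Bξ], [-(ξ ⊗ I), ξ0 I]]`, where `S = Σ ξ_k C^k`, `Bξ = (Σ_k ξ_k B^{jk})_j`, and the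
product of the off-diagonal blocks is `-M` with `M = Σ ξ_j ξ_k B^{jk} = B(0, ξ)`. As the lower
right block is scalar, a Schur complement gives `q^ξ · ξ0^n = ξ0^{dn} · p^ξ`, so `ξ0 = 0` is a zero
of `q^ξ` of multiplicity `dn - n` once `p^ξ(0) = det M ≠ 0`. For `ξ0 = 0` the lower right block
vanishes, and since `M` is invertible the kernel of `A(0, ξ)` is `{(0, l) : Bξ l = 0}`, of
dimension `dn - n` because `Bξ` is onto.
-/

open Matrix

/-- The second-order symbol `B(ξ0, ξ) = ξ0² B00 + ξ0 Σ_j ξ_j C^j + Σ_{j,k} ξ_j ξ_k B^{jk}`. -/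
noncomputable def Bsym (n d : ℕ) (B00 : Matrix (Fin n) (Fin n) ℝ)
    (Cc : Fin d → Matrix (Fin n) (Fin n) ℝ)
    (B : Fin d → Fin d → Matrix (Fin n) (Fin n) ℝ)
    (ξ0 : ℝ) (ξ : Fin d → ℝ) : Matrix (Fin n) (Fin n) ℝ :=
  ξ0 ^ 2 • B00 + ξ0 • ∑ j, ξ j • Cc j + ∑ j, ∑ k, (ξ j * ξ k) • B j k

/-- The first-order block symbol `A(ξ0, ξ)`, of size `(d+1)n × (d+1)n`; block index
`Sum.inl ()` is the `P`-block and `Sum.inr i` the `Q_i`-blocks. -/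
noncomputable def Asym (n d : ℕ) (B00 : Matrix (Fin n) (Fin n) ℝ)
    (Cc : Fin d → Matrix (Fin n) (Fin n) ℝ)
    (B : Fin d → Fin d → Matrix (Fin n) (Fin n) ℝ)
    (ξ0 : ℝ) (ξ : Fin d → ℝ) :
    Matrix ((Unit ⊕ Fin d) × Fin n) ((Unit ⊕ Fin d) × Fin n) ℝ :=
  fun p q =>
    match p, q with
    | (Sum.inl _, a), (Sum.inl _, b) => (ξ0 • B00 + ∑ k, ξ k • Cc k) a b
    | (Sum.inl _, a), (Sum.inr j, b) => (∑ k, ξ k • B j k) a b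
    | (Sum.inr i, a), (Sum.inl _, b) => if a = b then -ξ i else 0
    | (Sum.inr i, a), (Sum.inr j, b) => if i = j ∧ a = b then ξ0 else 0

/-- The dispersion polynomial `p^ξ(ξ0) = det B(ξ0, ξ)` as a polynomial in `ξ0`. -/
noncomputable def dispPoly (n d : ℕ) (B00 : Matrix (Fin n) (Fin n) ℝ)
    (Cc : Fin d → Matrix (Fin n) (Fin n) ℝ)
    (B : Fin d → Fin d → Matrix (Fin n) (Fin n) ℝ)
    (ξ : Fin d → ℝ) : Polynomial ℝ :=
  ((Polynomial.X : Polynomial ℝ) ^ 2 • B00.map Polynomial.C +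
    (Polynomial.X : Polynomial ℝ) • (∑ j, ξ j • Cc j).map Polynomial.C +
    (∑ j, ∑ k, (ξ j * ξ k) • B j k).map Polynomial.C).det

/-- The block-diagonal matrix `A⁰ = diag(B00, I, ..., I)` of the first-order formulation. -/
noncomputable def A0mat (n d : ℕ) (B00 : Matrix (Fin n) (Fin n) ℝ) :
    Matrix ((Unit ⊕ Fin d) × Fin n) ((Unit ⊕ Fin d) × Fin n) ℝ :=
  fun p q =>
    match p, q with
    | (Sum.inl _, a), (Sum.inl _, b) => B00 a b
    | (Sum.inr i, a), (Sum.inr j, b) => if i = j ∧ a = b then 1 else 0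
    | _, _ => 0

/-- The characteristic polynomial `q^ξ(ξ0) = det(ξ0 A⁰ + A(ξ))` of the first-order
formulation as a polynomial in `ξ0`. -/
noncomputable def qPoly (n d : ℕ) (B00 : Matrix (Fin n) (Fin n) ℝ)
    (Cc : Fin d → Matrix (Fin n) (Fin n) ℝ)
    (B : Fin d → Fin d → Matrix (Fin n) (Fin n) ℝ)
    (ξ : Fin d → ℝ) : Polynomial ℝ :=
  ((Polynomial.X : Polynomial ℝ) • (A0mat n d B00).map Polynomial.C +
    (Asym n d B00 Cc B 0 ξ).map Polynomial.C).det

namespace Matrix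

variable {m o R : Type*} [Fintype m] [Fintype o]

theorem finrank_ker_mulVecLin_submatrix_equiv {ι : Type*} [Fintype ι] [CommSemiring R]
    (M : Matrix m m R) (e : ι ≃ m) :
    Module.finrank R (LinearMap.ker (M.submatrix e e).mulVecLin) =
      Module.finrank R (LinearMap.ker M.mulVecLin) := by
  rw [show M.submatrix e e = reindex e.symm e.symm M from rfl, mulVecLin_reindex,
    LinearEquiv.ker_comp, LinearMap.ker_comp, Submodule.comap_equiv_eq_map_symm,
    LinearEquiv.finrank_map_eq]

variable [DecidableEq m]

theorem det_fromBlocks_smul_one_mul_pow [CommRing R] [DecidableEq o] (A : Matrix m m R)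
    (B : Matrix m o R) (C : Matrix o m R) (t : R) :
    (fromBlocks A B C (t • 1)).det * t ^ Fintype.card m =
      t ^ Fintype.card o * (t • A - B * C).det := by
  have h : fromBlocks A B C (t • 1) * fromBlocks (t • 1) 0 (-C) 1 =
      fromBlocks (t • A - B * C) B 0 (t • 1) := by
    simp only [fromBlocks_multiply, Matrix.mul_smul, Matrix.smul_mul, Matrix.mul_one,
      Matrix.one_mul, Matrix.mul_zero, Matrix.mul_neg, zero_add]
    congr 1 <;> simp [sub_eq_add_neg]
  have := congrArg det h
  rw [det_mul, det_fromBlocks_zero₁₂, det_fromBlocks_zero₂₁, det_smul, det_smul] at this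
  simpa [mul_comm] using this

variable [Field R]

theorem finrank_ker_mulVecLin_of_isUnit_mul {B : Matrix m o R} {C : Matrix o m R}
    (hBC : IsUnit (B * C)) :
    Module.finrank R (LinearMap.ker B.mulVecLin) = Fintype.card o - Fintype.card m := by
  have hsurj : LinearMap.range B.mulVecLin = ⊤ := by
    refine LinearMap.range_eq_top.mpr fun y => ?_
    obtain ⟨x, rfl⟩ := mulVec_surjective_iff_isUnit.mpr hBC y
    exact ⟨C *ᵥ x, by simp [mulVec_mulVec]⟩
  have := LinearMap.finrank_range_add_finrank_ker B.mulVecLin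
  rw [hsurj, finrank_top] at this
  simp only [Module.finrank_fintype_fun_eq_card] at this
  omega

theorem mem_ker_mulVecLin_fromBlocks_zero₂₂ (A : Matrix m m R) {B : Matrix m o R}
    {C : Matrix o m R} (hBC : IsUnit (B * C)) (x : m ⊕ o → R) :
    x ∈ LinearMap.ker (fromBlocks A B C 0).mulVecLin ↔
      x ∘ Sum.inl = 0 ∧ x ∘ Sum.inr ∈ LinearMap.ker B.mulVecLin := by
  have hC : Function.Injective C.mulVec := fun x y hxy =>
    mulVec_injective_iff_isUnit.mpr hBC (by simp only [← mulVec_mulVec, hxy])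
  simp only [LinearMap.mem_ker, mulVecLin_apply, fromBlocks_mulVec, zero_mulVec, add_zero]
  constructor
  · intro h
    have hAB := congrArg (· ∘ Sum.inl) h
    have hCx := congrArg (· ∘ Sum.inr) h
    simp only [Sum.elim_comp_inl, Sum.elim_comp_inr, Pi.zero_comp] at hAB hCx
    have hl : x ∘ Sum.inl = 0 := hC (by rw [hCx, mulVec_zero])
    exact ⟨hl, by simpa [hl] using hAB⟩
  · rintro ⟨hl, hB⟩
    simp [hl, hB]

theorem finrank_ker_mulVecLin_fromBlocks_zero₂₂ (A : Matrix m m R) {B : Matrix m o R}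
    {C : Matrix o m R} (hBC : IsUnit (B * C)) :
    Module.finrank R (LinearMap.ker (fromBlocks A B C 0).mulVecLin) =
      Fintype.card o - Fintype.card m := by
  have hmem := mem_ker_mulVecLin_fromBlocks_zero₂₂ A hBC
  let e : LinearMap.ker (fromBlocks A B C 0).mulVecLin ≃ₗ[R] LinearMap.ker B.mulVecLin :=
    { toFun x := ⟨x.1 ∘ Sum.inr, ((hmem x.1).1 x.2).2⟩
      invFun y := ⟨Sum.elim 0 y.1, (hmem _).2 ⟨Sum.elim_comp_inl _ _, by simp⟩⟩
      map_add' _ _ := rfl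
      map_smul' _ _ := rfl
      left_inv x := by
        ext (i | j)
        · exact (congrFun ((hmem x.1).1 x.2).1 i).symm
        · rfl
      right_inv _ := rfl }
  rw [e.finrank_eq, finrank_ker_mulVecLin_of_isUnit_mul hBC]

end Matrix

def blockEquiv (n d : ℕ) : (Unit ⊕ Fin d) × Fin n ≃ Fin n ⊕ Fin d × Fin n :=
  (Equiv.sumProdDistrib _ _ _).trans ((Equiv.punitProd _).sumCongr (Equiv.refl _))

section

open Polynomial

variable {n d : ℕ} (B00 : Matrix (Fin n) (Fin n) ℝ) (Cc : Fin d → Matrix (Fin n) (Fin n) ℝ)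
  (B : Fin d → Fin d → Matrix (Fin n) (Fin n) ℝ) (ξ : Fin d → ℝ)

def Asym₁₂ : Matrix (Fin n) (Fin d × Fin n) ℝ :=
  of fun a jb => (∑ k, ξ k • B jb.1 k) a jb.2

variable (n) in
def Asym₂₁ : Matrix (Fin d × Fin n) (Fin n) ℝ :=
  of fun ia b => if ia.2 = b then -ξ ia.1 else 0

theorem Asym₁₂_mul_Asym₂₁ : Asym₁₂ B ξ * Asym₂₁ n ξ = -∑ j, ∑ k, (ξ j * ξ k) • B j k := by
  ext a b
  simp [Asym₁₂, Asym₂₁, mul_apply, Fintype.sum_prod_type, Matrix.sum_apply, Finset.mul_sum,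
    mul_comm, mul_left_comm]

theorem Asym_zero_eq_submatrix :
    Asym n d B00 Cc B 0 ξ =
      (fromBlocks (∑ k, ξ k • Cc k) (Asym₁₂ B ξ) (Asym₂₁ n ξ) 0).submatrix
        (blockEquiv n d) (blockEquiv n d) := by
  ext ⟨_ | i, a⟩ ⟨_ | j, b⟩ <;> simp [Asym, Asym₁₂, Asym₂₁, blockEquiv]

theorem A0mat_eq_submatrix :
    A0mat n d B00 = (fromBlocks B00 0 0 1).submatrix (blockEquiv n d) (blockEquiv n d) := by
  ext ⟨_ | i, a⟩ ⟨_ | j, b⟩ <;> simp [A0mat, blockEquiv, one_apply, and_comm]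

theorem qPoly_mul_X_pow :
    qPoly n d B00 Cc B ξ * X ^ n = (X : ℝ[X]) ^ (d * n) * dispPoly n d B00 Cc B ξ := by
  have hblocks : (X : ℝ[X]) • (A0mat n d B00).map C + (Asym n d B00 Cc B 0 ξ).map C =
      ((X : ℝ[X]) • (fromBlocks B00 0 0 1).map C +
        (fromBlocks (∑ k, ξ k • Cc k) (Asym₁₂ B ξ) (Asym₂₁ n ξ) 0).map C).submatrix
          (blockEquiv n d) (blockEquiv n d) := by
    rw [A0mat_eq_submatrix, Asym_zero_eq_submatrix]
    rfl
  have hSchur : (X : ℝ[X]) • ((X : ℝ[X]) • B00.map C + (∑ k, ξ k • Cc k).map C) -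
      (Asym₁₂ B ξ).map C * (Asym₂₁ n ξ).map C =
      (X : ℝ[X]) ^ 2 • B00.map C + (X : ℝ[X]) • (∑ k, ξ k • Cc k).map C +
        (∑ j, ∑ k, (ξ j * ξ k) • B j k).map C := by
    rw [← Matrix.map_mul, Asym₁₂_mul_Asym₂₁, Matrix.map_neg _ (map_neg C), smul_add, smul_smul,
      sq, sub_neg_eq_add]
  rw [qPoly, dispPoly, hblocks, det_submatrix_equiv_self, fromBlocks_map, fromBlocks_map,
    fromBlocks_smul, fromBlocks_add]
  simp only [Matrix.map_zero, Matrix.map_one, map_zero, map_one, smul_zero, add_zero, zero_add]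
  have hdet := det_fromBlocks_smul_one_mul_pow ((X : ℝ[X]) • B00.map C + (∑ k, ξ k • Cc k).map C)
    ((Asym₁₂ B ξ).map C) ((Asym₂₁ n ξ).map C) X
  rwa [hSchur, Fintype.card_prod, Fintype.card_fin, Fintype.card_fin] at hdet

theorem dispPoly_eval_zero :
    (dispPoly n d B00 Cc B ξ).eval 0 = (∑ j, ∑ k, (ξ j * ξ k) • B j k).det := by
  rw [dispPoly, ← coe_evalRingHom, RingHom.map_det]
  congr 1
  ext a b
  simp

theorem rootMultiplicity_zero_qPoly (h0 : (dispPoly n d B00 Cc B ξ).eval 0 ≠ 0) :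
    (qPoly n d B00 Cc B ξ).rootMultiplicity 0 = (d - 1) * n := by
  have hX (k : ℕ) : rootMultiplicity 0 ((X : ℝ[X]) ^ k) = k := by
    simpa using rootMultiplicity_X_sub_C_pow (0 : ℝ) k
  have hp : dispPoly n d B00 Cc B ξ ≠ 0 := fun h => h0 (by rw [h, eval_zero])
  have hq := qPoly_mul_X_pow B00 Cc B ξ
  have hne : qPoly n d B00 Cc B ξ * X ^ n ≠ 0 := by
    rw [hq]
    exact mul_ne_zero (pow_ne_zero _ X_ne_zero) hp
  have hmult := congrArg (rootMultiplicity 0) hq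
  rw [rootMultiplicity_mul hne, rootMultiplicity_mul (hq ▸ hne), hX, hX,
    rootMultiplicity_eq_zero h0] at hmult
  rw [Nat.sub_one_mul]
  omega

theorem finrank_ker_Asym_zero (hM : IsUnit (∑ j, ∑ k, (ξ j * ξ k) • B j k)) :
    Module.finrank ℝ (LinearMap.ker (Asym n d B00 Cc B 0 ξ).mulVecLin) = (d - 1) * n := by
  have hBC : IsUnit (Asym₁₂ B ξ * Asym₂₁ n ξ) := by
    rw [Asym₁₂_mul_Asym₂₁]
    exact hM.neg
  rw [Asym_zero_eq_submatrix, finrank_ker_mulVecLin_submatrix_equiv,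
    finrank_ker_mulVecLin_fromBlocks_zero₂₂ _ hBC]
  simp [Nat.sub_one_mul]

end

theorem stmt10_general (n d : ℕ) (B00 : Matrix (Fin n) (Fin n) ℝ)
    (Cc : Fin d → Matrix (Fin n) (Fin n) ℝ)
    (B : Fin d → Fin d → Matrix (Fin n) (Fin n) ℝ)
    (ξ : Fin d → ℝ)
    (h0 : (dispPoly n d B00 Cc B ξ).eval 0 ≠ 0) :
    (qPoly n d B00 Cc B ξ).rootMultiplicity 0 = (d - 1) * n ∧
    Module.finrank ℝ (LinearMap.ker (Asym n d B00 Cc B 0 ξ).mulVecLin) = (d - 1) * n := by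
  have hM : IsUnit (∑ j, ∑ k, (ξ j * ξ k) • B j k) := by
    rwa [isUnit_iff_isUnit_det, isUnit_iff_ne_zero, ← dispPoly_eval_zero B00 Cc]
  exact ⟨rootMultiplicity_zero_qPoly B00 Cc B ξ h0, finrank_ker_Asym_zero B00 Cc B ξ hM⟩

/-- If all zeros of `p^ξ` are nonzero (i.e. `p^ξ(0) ≠ 0`), then `ξ0 = 0` is a zero of
`q^ξ` of algebraic multiplicity exactly `(d−1)n`, which equals `dim ker A(0,ξ)` for
nonzero `ξ`: the zero mode is semisimple. -/
theorem stmt10 (n d : ℕ) (B00 : Matrix (Fin n) (Fin n) ℝ)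
    (Cc : Fin d → Matrix (Fin n) (Fin n) ℝ)
    (B : Fin d → Fin d → Matrix (Fin n) (Fin n) ℝ)
    (ξ : Fin d → ℝ) (hξ : ξ ≠ 0)
    (h0 : (dispPoly n d B00 Cc B ξ).eval 0 ≠ 0) :
    (qPoly n d B00 Cc B ξ).rootMultiplicity 0 = (d - 1) * n ∧
    Module.finrank ℝ (LinearMap.ker (Asym n d B00 Cc B 0 ξ).mulVecLin) = (d - 1) * n :=
  stmt10_general n d B00 Cc B ξ h0
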